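/- For every y ∈ ℝ one has 4π²·∫_ℝ h²·W_φ(y,h) dh = (1/4)·|φ′(y)|² − (1/8)·(φ(y)·φ″(y)* + φ″(y)·φ(y)*) and 4π²·∫_ℝ h²·Y_φ(y,h) dh = (1/4)·((φ′(y))² − φ(y)·φ″(y)). -/

import Mathlib

/-!
Substituting `a = h - η/2`, `b = h + η/2` (a linear change of variables of determinant one)
factors `e^{2πiyη} = e^{-2πiya} e^{2πiyb}` and turns `h²` into `(a + b)²/4`, so each second
moment becomes a bilinear combination of the moments `M_n = ∫ ξⁿ e^{2πiyξ} φ̂(ξ) dξ`, `n ≤ 2`: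
the left factor is conjugated for `W` and reflected `ξ ↦ -ξ` for `Y`. Fourier inversion applied
to `φ⁽ⁿ⁾`, whose transform is `(2πiξ)ⁿ φ̂(ξ)`, gives `(2πi)ⁿ M_n = φ⁽ⁿ⁾(y)`.
-/

noncomputable section

open Real MeasureTheory

/-- Fourier transform `φ̂(ξ) = ∫ e^{−2πiξy} φ(y) dy`. -/
def hatFn (φ : SchwartzMap ℝ ℂ) (ξ : ℝ) : ℂ :=
  ∫ y : ℝ, Complex.exp (-2 * π * Complex.I * ξ * y) * φ y

/-- Wigner function `W_φ(y,h)`. -/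
def Wfn (φ : SchwartzMap ℝ ℂ) (y h : ℝ) : ℂ :=
  ∫ η : ℝ, Complex.exp (2 * π * Complex.I * y * η) *
    ((1 / 2) * (starRingEnd ℂ) (hatFn φ (h - η / 2)) * hatFn φ (h + η / 2))

/-- Anti-Wigner function `Y_φ(y,h)`. -/
def Yfn (φ : SchwartzMap ℝ ℂ) (y h : ℝ) : ℂ :=
  ∫ η : ℝ, Complex.exp (2 * π * Complex.I * y * η) *
    ((1 / 2) * hatFn φ (-h + η / 2) * hatFn φ (h + η / 2))

open FourierTransform ComplexConjugate SchwartzMap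

theorem LinearEquiv.measurePreserving_of_abs_det_eq_one {E : Type*} [NormedAddCommGroup E]
    [NormedSpace ℝ E] [MeasurableSpace E] [BorelSpace E] [FiniteDimensional ℝ E]
    (μ : Measure E) [μ.IsAddHaarMeasure] (L : E ≃ₗ[ℝ] E)
    (hL : |LinearMap.det (L : E →ₗ[ℝ] E)| = 1) : MeasurePreserving L μ μ := by
  refine ⟨L.toContinuousLinearEquiv.continuous.measurable, ?_⟩
  have hdet : LinearMap.det (L : E →ₗ[ℝ] E) ≠ 0 := by
    intro h
    simp [h] at hL
  change Measure.map (L : E →ₗ[ℝ] E) μ = μ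
  rw [Measure.map_linearMap_addHaar_eq_smul_addHaar μ hdet, abs_inv, hL]
  simp

def midpointCoords : (ℝ × ℝ) ≃ₗ[ℝ] ℝ × ℝ where
  toFun p := (p.1 - p.2 / 2, p.1 + p.2 / 2)
  invFun q := ((q.1 + q.2) / 2, q.2 - q.1)
  map_add' p q := by simp only [Prod.fst_add, Prod.snd_add, Prod.mk_add_mk]; congr 1 <;> ring
  map_smul' c p := by
    simp only [Prod.smul_fst, Prod.smul_snd, smul_eq_mul, RingHom.id_apply, Prod.smul_mk]
    congr 1 <;> ring
  left_inv p := by ext <;> simp only <;> ring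
  right_inv q := by ext <;> simp only <;> ring

theorem midpointCoords_apply (h η : ℝ) :
    midpointCoords (h, η) = (h - η / 2, h + η / 2) := rfl

theorem det_midpointCoords : LinearMap.det (midpointCoords : (ℝ × ℝ) →ₗ[ℝ] ℝ × ℝ) = 1 := by
  rw [← LinearMap.det_toMatrix (Module.Basis.finTwoProd ℝ), Matrix.det_fin_two]
  norm_num [LinearMap.toMatrix_apply, midpointCoords]

theorem integral_integral_midpointCoords {E : Type*} [NormedAddCommGroup E] [NormedSpace ℝ E]
    {F : ℝ × ℝ → E} (hF : Integrable F) :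
    ∫ h : ℝ, ∫ η : ℝ, F (midpointCoords (h, η)) = ∫ p, F p := by
  have hmp : MeasurePreserving midpointCoords :=
    midpointCoords.measurePreserving_of_abs_det_eq_one volume (by rw [det_midpointCoords, abs_one])
  have hemb : MeasurableEmbedding midpointCoords :=
    midpointCoords.toContinuousLinearEquiv.toHomeomorph.measurableEmbedding
  have hint : Integrable (F ∘ midpointCoords) (volume.prod volume) := by
    rw [← Measure.volume_eq_prod]
    exact (hmp.integrable_comp_emb hemb).2 hF
  rw [integral_integral (f := fun h η => F (midpointCoords (h, η))) hint,
    ← Measure.volume_eq_prod]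
  exact hmp.integral_comp hemb F

def moment (f : ℝ → ℂ) (n : ℕ) : ℂ := ∫ x : ℝ, (x : ℂ) ^ n * f x

section Moments

variable {f g : ℝ → ℂ} {n : ℕ}

theorem moment_conj : moment (fun x => conj (f x)) n = conj (moment f n) := by
  simp only [moment, ← integral_conj, map_mul, map_pow, Complex.conj_ofReal]

theorem moment_comp_neg : moment (fun x => f (-x)) n = (-1) ^ n * moment f n := by
  rw [moment, moment, ← integral_const_mul, ← integral_neg_eq_self]
  congr 1 with x
  rw [neg_neg, Complex.ofReal_neg, neg_pow, mul_assoc]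

theorem MeasureTheory.Integrable.pow_mul_conj (hf : Integrable fun x : ℝ => (x : ℂ) ^ n * f x) :
    Integrable fun x : ℝ => (x : ℂ) ^ n * conj (f x) := by
  refine hf.congr' ?_ (.of_forall fun x => by simp)
  exact (hf.aestronglyMeasurable.star).congr (.of_forall fun x => by simp)

theorem MeasureTheory.Integrable.pow_mul_comp_neg (hf : Integrable fun x : ℝ => (x : ℂ) ^ n * f x) :
    Integrable fun x : ℝ => (x : ℂ) ^ n * f (-x) := by
  refine (hf.comp_neg.const_mul ((-1) ^ n)).congr (.of_forall fun x => ?_)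
  simp only [Complex.ofReal_neg, neg_pow (x : ℂ), ← mul_assoc, ← mul_pow]
  norm_num

theorem integral_sq_mul_integral_midpoint
    (hf : ∀ n ≤ 2, Integrable fun x : ℝ => (x : ℂ) ^ n * f x)
    (hg : ∀ n ≤ 2, Integrable fun x : ℝ => (x : ℂ) ^ n * g x) :
    ∫ h : ℝ, (h : ℂ) ^ 2 * ∫ η : ℝ, f (h - η / 2) * g (h + η / 2)
      = (moment f 2 * moment g 0 + 2 * (moment f 1 * moment g 1) + moment f 0 * moment g 2) / 4 := by
  set P : ℕ → ℕ → ℝ × ℝ → ℂ := fun m n p => (p.1 : ℂ) ^ m * f p.1 * ((p.2 : ℂ) ^ n * g p.2)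
  have hP : ∀ m ≤ 2, ∀ n ≤ 2, Integrable (P m n) := fun m hm n hn => by
    rw [Measure.volume_eq_prod]
    exact (hf m hm).mul_prod (hg n hn)
  have hPint : ∀ m n, ∫ p, P m n p = moment f m * moment g n := fun m n => by
    rw [Measure.volume_eq_prod]
    exact integral_prod_mul (fun x : ℝ => (x : ℂ) ^ m * f x) (fun x : ℝ => (x : ℂ) ^ n * g x)
  -- `h² = ((a + b) / 2)²` in the coordinates `a = h - η/2`, `b = h + η/2`
  have hsplit : ∀ h η : ℝ, (h : ℂ) ^ 2 * (f (h - η / 2) * g (h + η / 2))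
      = (P 2 0 (midpointCoords (h, η)) + 2 * P 1 1 (midpointCoords (h, η))
          + P 0 2 (midpointCoords (h, η))) / 4 := fun h η => by
    simp only [P, midpointCoords_apply]
    push_cast
    ring
  have h20 := hP 2 le_rfl 0 (by norm_num)
  have h11 := (hP 1 (by norm_num) 1 (by norm_num)).const_mul 2
  have h02 := hP 0 (by norm_num) 2 le_rfl
  calc ∫ h : ℝ, (h : ℂ) ^ 2 * ∫ η : ℝ, f (h - η / 2) * g (h + η / 2)
      = ∫ h : ℝ, ∫ η : ℝ,
          (fun p => (P 2 0 p + 2 * P 1 1 p + P 0 2 p) / 4) (midpointCoords (h, η)) := by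
        congr 1 with h
        rw [← integral_const_mul]
        simp only [hsplit]
    _ = ∫ p, (P 2 0 p + 2 * P 1 1 p + P 0 2 p) / 4 :=
        integral_integral_midpointCoords (((h20.add h11).add h02).div_const 4)
    _ = _ := by
        rw [integral_div, integral_add (f := fun p => P 2 0 p + 2 * P 1 1 p) (h20.add h11) h02,
          integral_add h20 h11,
          integral_const_mul, hPint, hPint, hPint]

end Moments

section Schwartz

variable (φ : 𝓢(ℝ, ℂ))

theorem hatFn_eq_fourier (ξ : ℝ) : hatFn φ ξ = 𝓕 φ ξ := by
  rw [fourier_coe, Real.fourier_real_eq_integral_exp_smul, hatFn]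
  congr 1 with v
  rw [smul_eq_mul]
  push_cast
  ring_nf

def fourierInvIntegrand (y ξ : ℝ) : ℂ :=
  Complex.exp (2 * π * Complex.I * y * ξ) * 𝓕 φ ξ

theorem integrable_pow_mul_fourierInvIntegrand (y : ℝ) (n : ℕ) :
    Integrable fun ξ : ℝ => (ξ : ℂ) ^ n * fourierInvIntegrand φ y ξ := by
  refine ((𝓕 φ).integrable_pow_mul volume n).congr' ?_ (.of_forall fun ξ => ?_)
  · unfold fourierInvIntegrand
    exact Continuous.aestronglyMeasurable (by fun_prop)
  · simp [fourierInvIntegrand, Complex.norm_exp]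

theorem integral_fourierInvIntegrand (y : ℝ) : ∫ ξ, fourierInvIntegrand φ y ξ = φ y := by
  conv_rhs => rw [← fourierInv_fourier_eq (F := 𝓢(ℝ, ℂ)) φ, fourierInv_coe, Real.fourierInv_eq']
  congr 1 with ξ
  rw [fourierInvIntegrand, smul_eq_mul]
  congr 2
  simp only [RCLike.inner_apply, conj_trivial]
  push_cast
  ring

theorem fourierInvIntegrand_derivCLM (y ξ : ℝ) :
    fourierInvIntegrand (derivCLM ℝ ℂ φ) y ξ
      = 2 * π * Complex.I * ξ * fourierInvIntegrand φ y ξ := by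
  have hderiv : ⇑(derivCLM ℝ ℂ φ) = deriv φ := funext (derivCLM_apply ℝ φ)
  have := Real.fourier_deriv φ.integrable φ.differentiable (hderiv ▸ (derivCLM ℝ ℂ φ).integrable)
  simp only [fourierInvIntegrand, fourier_coe, hderiv, this, smul_eq_mul]
  ring

theorem moment_fourierInvIntegrand (y : ℝ) (n : ℕ) :
    (2 * π * Complex.I) ^ n * moment (fourierInvIntegrand φ y) n = iteratedDeriv n φ y := by
  induction n generalizing φ with
  | zero => simp [moment, integral_fourierInvIntegrand]
  | succ n ih =>
    rw [iteratedDeriv_succ', ← funext (derivCLM_apply ℝ φ), ← ih, moment, moment,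
      ← integral_const_mul, ← integral_const_mul]
    congr 1 with ξ
    rw [fourierInvIntegrand_derivCLM]
    ring

end Schwartz

section Wigner

variable (φ : 𝓢(ℝ, ℂ)) (y : ℝ)

theorem Wfn_eq_integral_fourierInvIntegrand (h : ℝ) :
    Wfn φ y h = (1 / 2) * ∫ η : ℝ,
      conj (fourierInvIntegrand φ y (h - η / 2)) * fourierInvIntegrand φ y (h + η / 2) := by
  rw [Wfn, ← integral_const_mul]
  congr 1 with η
  have hexp : Complex.exp (2 * π * Complex.I * y * η)
      = conj (Complex.exp (2 * π * Complex.I * y * ↑(h - η / 2)))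
        * Complex.exp (2 * π * Complex.I * y * ↑(h + η / 2)) := by
    rw [← Complex.exp_conj, ← Complex.exp_add]
    congr 1
    simp only [map_mul, map_ofNat, Complex.conj_ofReal, Complex.conj_I]
    push_cast
    ring
  simp only [hatFn_eq_fourier, fourierInvIntegrand, hexp, map_mul]
  ring

theorem Yfn_eq_integral_fourierInvIntegrand (h : ℝ) :
    Yfn φ y h = (1 / 2) * ∫ η : ℝ,
      fourierInvIntegrand φ y (-(h - η / 2)) * fourierInvIntegrand φ y (h + η / 2) := by
  rw [Yfn, ← integral_const_mul]
  congr 1 with η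
  have hexp : Complex.exp (2 * π * Complex.I * y * η)
      = Complex.exp (2 * π * Complex.I * y * ↑(-(h - η / 2)))
        * Complex.exp (2 * π * Complex.I * y * ↑(h + η / 2)) := by
    rw [← Complex.exp_add]
    congr 1
    push_cast
    ring
  rw [show -h + η / 2 = -(h - η / 2) by ring]
  simp only [hatFn_eq_fourier, fourierInvIntegrand, hexp]
  ring

theorem integral_sq_mul_Wfn :
    ∫ h : ℝ, (h : ℂ) ^ 2 * Wfn φ y h
      = (conj (moment (fourierInvIntegrand φ y) 2) * moment (fourierInvIntegrand φ y) 0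
          + 2 * (conj (moment (fourierInvIntegrand φ y) 1) * moment (fourierInvIntegrand φ y) 1)
          + conj (moment (fourierInvIntegrand φ y) 0) * moment (fourierInvIntegrand φ y) 2) / 8 := by
  have hint := integrable_pow_mul_fourierInvIntegrand φ y
  simp_rw [Wfn_eq_integral_fourierInvIntegrand, mul_left_comm _ (1 / 2 : ℂ), integral_const_mul]
  rw [integral_sq_mul_integral_midpoint (fun n _ => (hint n).pow_mul_conj) (fun n _ => hint n)]
  simp only [moment_conj]
  ring

theorem integral_sq_mul_Yfn :
    ∫ h : ℝ, (h : ℂ) ^ 2 * Yfn φ y h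
      = (2 * (moment (fourierInvIntegrand φ y) 2 * moment (fourierInvIntegrand φ y) 0)
          - 2 * moment (fourierInvIntegrand φ y) 1 ^ 2) / 8 := by
  have hint := integrable_pow_mul_fourierInvIntegrand φ y
  simp_rw [Yfn_eq_integral_fourierInvIntegrand, mul_left_comm _ (1 / 2 : ℂ), integral_const_mul]
  rw [integral_sq_mul_integral_midpoint (fun n _ => (hint n).pow_mul_comp_neg) (fun n _ => hint n)]
  simp only [moment_comp_neg]
  ring

end Wigner

theorem wigner_second_moments (φ : SchwartzMap ℝ ℂ) (y : ℝ) :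
    ((4 * π ^ 2 : ℝ) : ℂ) * (∫ h : ℝ, (h : ℂ) ^ 2 * Wfn φ y h)
      = (((1 / 4) * ‖deriv (⇑φ) y‖ ^ 2 : ℝ) : ℂ)
        - (1 / 8) * (φ y * (starRingEnd ℂ) (deriv (deriv (⇑φ)) y)
            + deriv (deriv (⇑φ)) y * (starRingEnd ℂ) (φ y)) ∧
    ((4 * π ^ 2 : ℝ) : ℂ) * (∫ h : ℝ, (h : ℂ) ^ 2 * Yfn φ y h)
      = (1 / 4) * ((deriv (⇑φ) y) ^ 2 - φ y * deriv (deriv (⇑φ)) y) := by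
  have hM : ∀ n, moment (fourierInvIntegrand φ y) n
      = iteratedDeriv n φ y / (2 * π * Complex.I) ^ n := fun n => by
    rw [← moment_fourierInvIntegrand, mul_div_cancel_left₀ _ (by simp [Real.pi_ne_zero])]
  rw [integral_sq_mul_Wfn, integral_sq_mul_Yfn, hM, hM, hM, iteratedDeriv_zero,
    iteratedDeriv_one, iteratedDeriv_succ, iteratedDeriv_one]
  have hπ : (π : ℂ) ≠ 0 := Complex.ofReal_ne_zero.2 Real.pi_ne_zero
  have hnorm : (‖deriv φ y‖ : ℂ) ^ 2 = deriv φ y * conj (deriv φ y) :=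
    (Complex.mul_conj' _).symm
  constructor
  · simp only [map_div₀, map_pow, map_mul, map_ofNat, Complex.conj_ofReal, Complex.conj_I]
    push_cast
    rw [hnorm]
    field_simp
    rw [Complex.I_sq]
    ring
  · field_simp
    rw [Complex.I_sq]
    push_cast
    ring
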